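/- The nested sequent Löb axiom is cut-free provable: the sequent consisting of the single formula ◇(□α ∧ α⊥) ∨ □α is derivable in the cut-free nested sequent calculus for GL. -/
import Mathlib


/-- Formulas of GL in negation normal form. -/
inductive Formula : Type where
  | pos : ℕ → Formula
  | neg : ℕ → Formula
  | and : Formula → Formula → Formula
  | or  : Formula → Formula → Formula
  | box : Formula → Formula
  | dia : Formula → Formula
deriving DecidableEq

/-- Negation `A⊥` of a formula, via De Morgan duality. -/
def Formula.negate : Formula → Formula
  | .pos a => .neg a
  | .neg a => .pos a
  | .and A B => .or A.negate B.negate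
  | .or A B => .and A.negate B.negate
  | .box A => .dia A.negate
  | .dia A => .box A.negate

/-- An element of a nested sequent: a formula or a nested (bracketed) sequent. -/
inductive SeqElem : Type where
  | fml : Formula → SeqElem
  | nest : List SeqElem → SeqElem

/-- A nested sequent. -/
abbrev Sequent := List SeqElem

/-- Unary contexts: a nested sequent with a single hole. -/
inductive Ctx : Type where
  | hole : Sequent → Ctx
  | nest : Sequent → Ctx → Ctx

/-- Fill the hole of a context with a sequent. -/
def Ctx.fill : Ctx → Sequent → Sequent
  | .hole Δ, Γ => Δ ++ Γ
  | .nest Δ c, Γ => .nest (c.fill Γ) :: Δ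

/-- Depth of a context: number of brackets surrounding the hole. -/
def Ctx.depth : Ctx → ℕ
  | .hole _ => 0
  | .nest _ c => c.depth + 1

/-- Equivalence of nested sequents up to (deep) exchange. -/
inductive SeqEquiv : Sequent → Sequent → Prop where
  | nil : SeqEquiv [] []
  | cons {e : SeqElem} {Γ Δ : Sequent} : SeqEquiv Γ Δ → SeqEquiv (e :: Γ) (e :: Δ)
  | consNest {Γ' Δ' Γ Δ : Sequent} :
      SeqEquiv Γ' Δ' → SeqEquiv Γ Δ → SeqEquiv (.nest Γ' :: Γ) (.nest Δ' :: Δ)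
  | swap (a b : SeqElem) (Γ : Sequent) : SeqEquiv (a :: b :: Γ) (b :: a :: Γ)
  | trans {Γ Δ Θ : Sequent} : SeqEquiv Γ Δ → SeqEquiv Δ Θ → SeqEquiv Γ Θ

/-- `DerivH n Γ`: `Γ` has a cut-free derivation of height at most `n`. -/
inductive DerivH : ℕ → Sequent → Prop where
  | id (n : ℕ) (c : Ctx) (a : ℕ) :
      DerivH n (c.fill [.fml (.pos a), .fml (.neg a)])
  | and {n : ℕ} {c : Ctx} {A B : Formula} :
      DerivH n (c.fill [.fml A]) → DerivH n (c.fill [.fml B]) →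
      DerivH (n + 1) (c.fill [.fml (.and A B)])
  | or {n : ℕ} {c : Ctx} {A B : Formula} :
      DerivH n (c.fill [.fml A, .fml B]) →
      DerivH (n + 1) (c.fill [.fml (.or A B)])
  | box {n : ℕ} {c : Ctx} {A : Formula} :
      DerivH n (c.fill [.nest [.fml (.dia A.negate), .fml A]]) →
      DerivH (n + 1) (c.fill [.fml (.box A)])
  | dia {n : ℕ} (c d : Ctx) {A : Formula} :
      0 < d.depth →
      DerivH n (c.fill (d.fill [.fml A] ++ [.fml (.dia A)])) →
      DerivH (n + 1) (c.fill (d.fill [] ++ [.fml (.dia A)]))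
  | exch {n : ℕ} {Γ Δ : Sequent} : SeqEquiv Γ Δ → DerivH n Γ → DerivH n Δ
  | up {n : ℕ} {Γ : Sequent} : DerivH n Γ → DerivH (n + 1) Γ

/-- Derivability where cut is permitted on formulas satisfying `P`. -/
inductive DerivWith (P : Formula → Prop) : Sequent → Prop where
  | id (c : Ctx) (a : ℕ) :
      DerivWith P (c.fill [.fml (.pos a), .fml (.neg a)])
  | and {c : Ctx} {A B : Formula} :
      DerivWith P (c.fill [.fml A]) → DerivWith P (c.fill [.fml B]) →
      DerivWith P (c.fill [.fml (.and A B)])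
  | or {c : Ctx} {A B : Formula} :
      DerivWith P (c.fill [.fml A, .fml B]) →
      DerivWith P (c.fill [.fml (.or A B)])
  | box {c : Ctx} {A : Formula} :
      DerivWith P (c.fill [.nest [.fml (.dia A.negate), .fml A]]) →
      DerivWith P (c.fill [.fml (.box A)])
  | dia (c d : Ctx) {A : Formula} :
      0 < d.depth →
      DerivWith P (c.fill (d.fill [.fml A] ++ [.fml (.dia A)])) →
      DerivWith P (c.fill (d.fill [] ++ [.fml (.dia A)]))
  | cut {c : Ctx} {A : Formula} : P A →
      DerivWith P (c.fill [.fml A]) → DerivWith P (c.fill [.fml A.negate]) →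
      DerivWith P (c.fill [])
  | exch {Γ Δ : Sequent} : SeqEquiv Γ Δ → DerivWith P Γ → DerivWith P Δ

/-- Cut-free derivability. -/
abbrev Deriv : Sequent → Prop := DerivWith (fun _ => False)

/-- the Löb axiom `◇(□α ∧ α⊥) ∨ □α` is cut-free provable. -/
theorem loeb_provable (a : ℕ) :
    Deriv [.fml (.or (.dia (.and (.box (.pos a)) (.neg a))) (.box (.pos a)))] := by
  -- abbreviations: D' = ◇(□a ∧ ¬a), na = neg a, p = pos a
  refine DerivWith.or (c := .hole []) ?_
  refine DerivWith.box (c := .hole [.fml (.dia (.and (.box (.pos a)) (.neg a)))]) ?_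
  refine DerivWith.exch (SeqEquiv.swap _ _ []) ?_
  refine DerivWith.dia (.hole []) (.nest [] (.hole [.fml (.dia (.neg a)), .fml (.pos a)]))
    (Nat.succ_pos _) ?_
  refine DerivWith.and
    (c := .nest [.fml (.dia (.and (.box (.pos a)) (.neg a)))]
      (.hole [.fml (.dia (.neg a)), .fml (.pos a)])) ?_ ?_
  · -- [.nest [◇na, p, □p], fml D']
    refine DerivWith.box
      (c := .nest [.fml (.dia (.and (.box (.pos a)) (.neg a)))]
        (.hole [.fml (.dia (.neg a)), .fml (.pos a)])) ?_
    -- goal: [.nest [◇na, p, .nest [◇na, p]], fml D']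
    refine DerivWith.exch
      (SeqEquiv.consNest
        (SeqEquiv.trans (SeqEquiv.swap _ _ _)
          (SeqEquiv.trans (SeqEquiv.cons (SeqEquiv.swap _ _ []))
            (SeqEquiv.swap _ _ _)))
        (SeqEquiv.cons SeqEquiv.nil)) ?_
    -- now: [.nest [.nest [◇na,p], p, ◇na], fml D']
    refine DerivWith.dia
      (.nest [.fml (.dia (.and (.box (.pos a)) (.neg a)))] (.hole []))
      (.nest [.fml (.pos a)] (.hole [.fml (.dia (.neg a)), .fml (.pos a)]))
      (Nat.succ_pos _) ?_
    exact DerivWith.id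
      (.nest [.fml (.dia (.and (.box (.pos a)) (.neg a)))]
        (.nest [.fml (.pos a), .fml (.dia (.neg a))] (.hole [.fml (.dia (.neg a))]))) a
  · -- [.nest [◇na, p, na], fml D']
    exact DerivWith.id
      (.nest [.fml (.dia (.and (.box (.pos a)) (.neg a)))]
        (.hole [.fml (.dia (.neg a))])) a
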